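/- arXiv:2507.22814 — 2 statements merged into one kernel-verified Lean document; each statement's English description precedes it below -/
import Mathlib

section
/- For any natural number η, the maximum number of unordered triples of particles sharing a common site, over all distributions of η particles into sites with at most 4 particles per site, equals 4⌊η/4⌋ + 1 if η ≡ 3 (mod 4), and 4⌊η/4⌋ otherwise. In particular this maximum is at most η. -/
private def fmax (n : ℕ) : ℕ := if n % 4 = 3 then 4 * (n / 4) + 1 else 4 * (n / 4)

private lemma fmax_super (a b : ℕ) : fmax a + fmax b ≤ fmax (a + b) := by
  unfold fmax; split_ifs <;> omega

private lemma choose_le_fmax {a : ℕ} (h : a ≤ 4) : Nat.choose a 3 ≤ fmax a := by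
  interval_cases a <;> decide

private lemma upper (s : Multiset ℕ) (h : ∀ k ∈ s, k ≤ 4) :
    (s.map (fun k => Nat.choose k 3)).sum ≤ fmax s.sum := by
  induction s using Multiset.induction with
  | empty => simp [fmax]
  | cons a s ih =>
    simp only [Multiset.map_cons, Multiset.sum_cons]
    calc Nat.choose a 3 + (s.map (fun k => Nat.choose k 3)).sum
        ≤ fmax a + fmax s.sum := by
          refine Nat.add_le_add (choose_le_fmax (h a (by simp))) (ih ?_)
          exact fun k hk => h k (by simp [hk])
      _ ≤ fmax (a + s.sum) := fmax_super a s.sum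

/-- the maximum number of co-located unordered triples, over all distributions
of `η` particles into sites holding at most 4 particles each, is `4⌊η/4⌋ + 1` when
`η ≡ 3 (mod 4)` and `4⌊η/4⌋` otherwise; moreover this maximum is at most `η`.
A distribution is encoded by the multiset of site occupation numbers. -/
theorem max_triples (η : ℕ) :
    IsGreatest
      {N : ℕ | ∃ s : Multiset ℕ, (∀ k ∈ s, k ≤ 4) ∧ s.sum = η ∧
        N = (s.map (fun k => Nat.choose k 3)).sum}
      (if η % 4 = 3 then 4 * (η / 4) + 1 else 4 * (η / 4)) ∧
    (if η % 4 = 3 then 4 * (η / 4) + 1 else 4 * (η / 4)) ≤ η := by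
  have hle : (if η % 4 = 3 then 4 * (η / 4) + 1 else 4 * (η / 4)) ≤ η := by
    split_ifs <;> omega
  refine ⟨⟨⟨(η % 4) ::ₘ Multiset.replicate (η / 4) 4, ?_, ?_, ?_⟩, ?_⟩, hle⟩
  · intro k hk
    rcases Multiset.mem_cons.mp hk with h | h
    · omega
    · simp [Multiset.eq_of_mem_replicate h]
  · simp [Multiset.sum_replicate]; omega
  · simp only [Multiset.map_cons, Multiset.sum_cons, Multiset.map_replicate,
      Multiset.sum_replicate, smul_eq_mul]
    have h4 : η % 4 < 4 := Nat.mod_lt _ (by norm_num)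
    interval_cases h : η % 4 <;> simp [h, Nat.choose] <;> omega
  · intro N hN
    obtain ⟨s, hs, hsum, hN⟩ := hN
    have := upper s hs
    rw [hsum] at this
    rw [hN]
    exact le_trans this (by unfold fmax; exact le_refl _)
end

section
/- For bounded self-adjoint operators T, V on a Hilbert space and t ∈ ℝ, the first-order Trotter error satisfies ‖e^{−it(T+V)} − e^{−itT} e^{−itV}‖ ≤ (t²/2) ‖[T, V]‖. -/
/-!
With `a = -iT` and `b = -iV`, which are skew-adjoint, interpolate between the two evolutions by
`G r = e^{(t-r)(a+b)} e^{ra} e^{rb}`, so that `G 0 = e^{t(a+b)}` and `G t = e^{ta} e^{tb}`.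
Its derivative is `e^{(t-r)(a+b)} [e^{ra}, b] e^{rb}`; the outer factors are unitary, and
`‖[e^{ra}, b]‖ ≤ |r| ‖[a, b]‖` because `r ↦ e^{ra} b e^{-ra}` has derivative
`e^{ra} [a, b] e^{-ra}`. Integrating the bound `r ‖[a, b]‖` over `[0, t]` gives `t²/2 ‖[a, b]‖`.
-/

open NormedSpace

section BanachAlgebra

variable {𝔸 : Type*} [NormedRing 𝔸] [NormedAlgebra ℝ 𝔸] [CompleteSpace 𝔸]

theorem hasDerivAt_exp_smul_mul_mul_exp_neg_smul (a y : 𝔸) (s : ℝ) :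
    HasDerivAt (fun r : ℝ => exp (r • a) * y * exp (-r • a))
      (exp (s • a) * (a * y - y * a) * exp (-s • a)) s := by
  have hneg := (hasDerivAt_exp_smul_const' a (-s)).scomp s (hasDerivAt_neg s)
  refine (((hasDerivAt_exp_smul_const a s).mul_const y).mul hneg).congr_deriv ?_
  simp only [Function.comp_apply, neg_one_smul]
  noncomm_ring

theorem hasDerivAt_exp_sub_smul_add_mul_exp_smul_mul_exp_smul (a b : 𝔸) (t s : ℝ) :
    HasDerivAt (fun r : ℝ => exp ((t - r) • (a + b)) * (exp (r • a) * exp (r • b)))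
      (exp ((t - s) • (a + b)) * (exp (s • a) * b - b * exp (s • a)) * exp (s • b)) s := by
  have hleft := (hasDerivAt_exp_smul_const (a + b) (t - s)).scomp s
    ((hasDerivAt_id s).const_sub t)
  have hright := (hasDerivAt_exp_smul_const' a s).mul (hasDerivAt_exp_smul_const' b s)
  refine (hleft.mul hright).congr_deriv ?_
  simp only [Function.comp_apply, Pi.mul_apply, neg_one_smul]
  noncomm_ring

end BanachAlgebra

section CStarAlgebra

variable {𝔸 : Type*} [NormedRing 𝔸] [NormedAlgebra ℝ 𝔸] [CompleteSpace 𝔸] [StarRing 𝔸]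
  [CStarRing 𝔸] [StarModule ℝ 𝔸] {a b : 𝔸}

theorem exp_smul_mem_unitary_of_mem_skewAdjoint (ha : a ∈ skewAdjoint 𝔸) (s : ℝ) :
    exp (s • a) ∈ unitary 𝔸 :=
  let +nondep : NormedAlgebra ℚ 𝔸 := .restrictScalars ℚ ℝ 𝔸
  exp_mem_unitary_of_mem_skewAdjoint (skewAdjoint.smul_mem s ha)

theorem norm_exp_smul_mul_mul_exp_smul (ha : a ∈ skewAdjoint 𝔸) (hb : b ∈ skewAdjoint 𝔸)
    (s r : ℝ) (y : 𝔸) : ‖exp (s • a) * y * exp (r • b)‖ = ‖y‖ := by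
  rw [CStarRing.norm_mul_mem_unitary _ (exp_smul_mem_unitary_of_mem_skewAdjoint hb r),
    CStarRing.norm_mem_unitary_mul _ (exp_smul_mem_unitary_of_mem_skewAdjoint ha s)]

theorem norm_exp_smul_mul_sub_mul_exp_smul_le (ha : a ∈ skewAdjoint 𝔸) (y : 𝔸) (s : ℝ) :
    ‖exp (s • a) * y - y * exp (s • a)‖ ≤ |s| * ‖a * y - y * a‖ := by
  let +nondep : NormedAlgebra ℚ 𝔸 := .restrictScalars ℚ ℝ 𝔸
  have hconj : ‖exp (s • a) * y * exp (-s • a) - y‖ ≤ ‖a * y - y * a‖ * ‖s - 0‖ := by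
    simpa using convex_univ.norm_image_sub_le_of_norm_hasDerivWithin_le
      (fun r _ => (hasDerivAt_exp_smul_mul_mul_exp_neg_smul a y r).hasDerivWithinAt)
      (fun r _ => (norm_exp_smul_mul_mul_exp_smul ha ha r (-r) _).le)
      (Set.mem_univ 0) (Set.mem_univ s)
  have hinv : exp (-s • a) * exp (s • a) = 1 := by
    rw [← exp_add_of_commute ((Commute.refl a).smul_left _ |>.smul_right _), ← add_smul,
      neg_add_cancel, zero_smul, exp_zero]
  have hfactor : exp (s • a) * y - y * exp (s • a)
      = (exp (s • a) * y * exp (-s • a) - y) * exp (s • a) := by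
    rw [sub_mul, mul_assoc _ (exp (-s • a)), hinv, mul_one]
  rw [hfactor, CStarRing.norm_mul_mem_unitary _ (exp_smul_mem_unitary_of_mem_skewAdjoint ha s),
    mul_comm, ← Real.norm_eq_abs]
  simpa using hconj

theorem norm_exp_smul_add_sub_exp_smul_mul_exp_smul_le_of_nonneg (ha : a ∈ skewAdjoint 𝔸)
    (hb : b ∈ skewAdjoint 𝔸) {t : ℝ} (ht : 0 ≤ t) :
    ‖exp (t • (a + b)) - exp (t • a) * exp (t • b)‖ ≤ t ^ 2 / 2 * ‖a * b - b * a‖ := by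
  set G : ℝ → 𝔸 := fun r => exp ((t - r) • (a + b)) * (exp (r • a) * exp (r • b))
  have hG := hasDerivAt_exp_sub_smul_add_mul_exp_smul_mul_exp_smul a b t
  have hbound : ∀ r ∈ Set.Ico 0 t,
      ‖exp ((t - r) • (a + b)) * (exp (r • a) * b - b * exp (r • a)) * exp (r • b)‖
        ≤ ‖a * b - b * a‖ * r := by
    intro r hr
    rw [norm_exp_smul_mul_mul_exp_smul (add_mem ha hb) hb]
    simpa [abs_of_nonneg hr.1, mul_comm] using norm_exp_smul_mul_sub_mul_exp_smul_le ha b r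
  have hquad (r : ℝ) :
      HasDerivAt (fun r => ‖a * b - b * a‖ * (r ^ 2 / 2)) (‖a * b - b * a‖ * r) r := by
    simpa using ((hasDerivAt_pow 2 r).div_const 2).const_mul ‖a * b - b * a‖
  have := image_norm_le_of_norm_deriv_right_le_deriv_boundary (f := fun r => G r - G 0)
    (fun r _ => ((hG r).sub_const (G 0)).continuousAt.continuousWithinAt)
    (fun r _ => ((hG r).sub_const (G 0)).hasDerivWithinAt) (by simp) hquad hbound
    (Set.right_mem_Icc.2 ht)
  simpa [G, norm_sub_rev, mul_comm] using this

theorem norm_exp_smul_add_sub_exp_smul_mul_exp_smul_le (ha : a ∈ skewAdjoint 𝔸)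
    (hb : b ∈ skewAdjoint 𝔸) (t : ℝ) :
    ‖exp (t • (a + b)) - exp (t • a) * exp (t • b)‖ ≤ t ^ 2 / 2 * ‖a * b - b * a‖ := by
  rcases le_total 0 t with ht | ht
  · exact norm_exp_smul_add_sub_exp_smul_mul_exp_smul_le_of_nonneg ha hb ht
  · simpa [neg_add, neg_smul_neg] using
      norm_exp_smul_add_sub_exp_smul_mul_exp_smul_le_of_nonneg (neg_mem ha) (neg_mem hb)
        (neg_nonneg.2 ht)

end CStarAlgebra

/-- first-order Trotter error bound
`‖e^{−it(T+V)} − e^{−itT} e^{−itV}‖ ≤ (t²/2) ‖[T,V]‖`. -/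
theorem first_order_trotter_bound
    {H : Type*} [NormedAddCommGroup H] [InnerProductSpace ℂ H] [CompleteSpace H]
    (T V : H →L[ℂ] H) (hT : IsSelfAdjoint T) (hV : IsSelfAdjoint V) (t : ℝ) :
    ‖NormedSpace.exp ((-Complex.I * (t : ℂ)) • (T + V))
        - NormedSpace.exp ((-Complex.I * (t : ℂ)) • T)
          * NormedSpace.exp ((-Complex.I * (t : ℂ)) • V)‖
      ≤ t ^ 2 / 2 * ‖T * V - V * T‖ := by
  have hskew {X : H →L[ℂ] H} (hX : IsSelfAdjoint X) :
      -Complex.I • X ∈ skewAdjoint (H →L[ℂ] H) :=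
    hX.smul_mem_skewAdjoint (by simp [skewAdjoint.mem_iff])
  have hsmul (X : H →L[ℂ] H) : (-Complex.I * (t : ℂ)) • X = t • (-Complex.I • X) := by
    rw [mul_comm, mul_smul, Complex.coe_smul]
  have hcomm : ‖(-Complex.I • T) * (-Complex.I • V) - (-Complex.I • V) * (-Complex.I • T)‖
      = ‖T * V - V * T‖ := by
    simp [← smul_sub, norm_smul]
  rw [hsmul, hsmul, hsmul, smul_add, ← hcomm]
  exact norm_exp_smul_add_sub_exp_smul_mul_exp_smul_le (hskew hT) (hskew hV) t
end
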